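/- arXiv:1001.2797 — 7 statements merged into one kernel-verified Lean document; each statement's English description precedes it below -/
import Mathlib

section
/- Let P_α = Σ_{i=1}^d α_i P_i be a mixture of Markov kernels P_i on a measurable space X with nonnegative weights summing to 1, and similarly P_{α'} = Σ_i α'_i P_i with α, α' ∈ Y := [ε,1]^d ∩ Δ_{d-1}. Then for every x, the total variation distance satisfies ‖P_α(x,·) - P_{α'}(x,·)‖_TV ≤ |α - α'| / (ε + |α - α'|) ≤ |α - α'| / ε, where |α - α'| denotes the maximum coordinate difference. -/
/-!
Both mixtures are evaluated on `A` as `∑ i, βᵢ tᵢ` with `tᵢ = Pᵢ(x, A) ∈ [0, 1]`, so the difference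
is `∑ i, (αᵢ - α'ᵢ) tᵢ`. This is at most the sum of `αᵢ - α'ᵢ` over the set `S` of indices where it
is positive. With `k = #S`, that sum is at most `k δ` (each term is at most `δ`) and at most
`1 - k ε` (it is at most `∑_S αᵢ - ∑_S α'ᵢ ≤ 1 - k ε`), and `min (k δ) (1 - k ε) ≤ δ / (ε + δ)`
whatever `k` is. The other sign follows by exchanging `α` and `α'`.
-/

open ProbabilityTheory MeasureTheory Finset
open scoped ENNReal

lemma le_div_add_of_le_mul_of_le_one_sub_mul {a k ε δ : ℝ} (hε : 0 ≤ ε) (hδ : 0 ≤ δ)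
    (h₁ : a ≤ k * δ) (h₂ : a ≤ 1 - k * ε) : a ≤ δ / (ε + δ) := by
  rcases (add_nonneg hε hδ).eq_or_lt with hεδ | hεδ
  · have hδ0 : δ = 0 := by linarith
    simpa [hδ0] using h₁
  · -- `a (ε + δ) ≤ k δ ε + (1 - k ε) δ = δ`
    rw [le_div_iff₀ hεδ]
    nlinarith [mul_le_mul_of_nonneg_right h₁ hε, mul_le_mul_of_nonneg_right h₂ hδ]

section WeightDifference

variable {ι : Type*} [Fintype ι] {α α' t : ι → ℝ}

lemma sum_sub_mul_le_sum_filter_lt (ht0 : ∀ i, 0 ≤ t i) (ht1 : ∀ i, t i ≤ 1) :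
    ∑ i, (α i - α' i) * t i ≤ ∑ i with α' i < α i, (α i - α' i) := by
  rw [sum_filter]
  refine sum_le_sum fun i _ => ?_
  split_ifs with h
  · exact mul_le_of_le_one_right (sub_nonneg.2 h.le) (ht1 i)
  · exact mul_nonpos_of_nonpos_of_nonneg (sub_nonpos.2 (not_lt.1 h)) (ht0 i)

lemma sum_sub_le_one_sub_card_mul (S : Finset ι) {ε : ℝ} (hα0 : ∀ i, 0 ≤ α i)
    (hαsum : ∑ i, α i ≤ 1) (hα' : ∀ i, ε ≤ α' i) :
    ∑ i ∈ S, (α i - α' i) ≤ 1 - #S * ε := by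
  have hαS : ∑ i ∈ S, α i ≤ 1 :=
    (sum_le_sum_of_subset_of_nonneg S.subset_univ fun i _ _ => hα0 i).trans hαsum
  have hα'S : #S * ε ≤ ∑ i ∈ S, α' i := by
    simpa using card_nsmul_le_sum S α' ε fun i _ => hα' i
  rw [sum_sub_distrib]
  linarith

lemma sum_sub_mul_le_div {ε δ : ℝ} (hε : 0 ≤ ε) (hδ : 0 ≤ δ)
    (hα0 : ∀ i, 0 ≤ α i) (hαsum : ∑ i, α i ≤ 1) (hα' : ∀ i, ε ≤ α' i)
    (hdiff : ∀ i, α i - α' i ≤ δ) (ht0 : ∀ i, 0 ≤ t i) (ht1 : ∀ i, t i ≤ 1) :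
    ∑ i, α i * t i - ∑ i, α' i * t i ≤ δ / (ε + δ) := by
  set S := univ.filter fun i => α' i < α i
  have hcard : ∑ i ∈ S, (α i - α' i) ≤ #S * δ := by
    simpa using sum_le_card_nsmul S _ δ fun i _ => hdiff i
  rw [← sum_sub_distrib]
  simp_rw [← sub_mul]
  exact (sum_sub_mul_le_sum_filter_lt ht0 ht1).trans <|
    le_div_add_of_le_mul_of_le_one_sub_mul hε hδ hcard
      (sum_sub_le_one_sub_card_mul S hα0 hαsum hα')

end WeightDifference

lemma toReal_sum_ofReal_smul_apply {ι X : Type*} [Fintype ι] [MeasurableSpace X]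
    (μ : ι → Measure X) [∀ i, IsFiniteMeasure (μ i)] {β : ι → ℝ} (hβ : ∀ i, 0 ≤ β i)
    (A : Set X) :
    ((∑ i, ENNReal.ofReal (β i) • μ i) A).toReal = ∑ i, β i * (μ i).real A := by
  rw [Measure.coe_finsetSum, Finset.sum_apply, ENNReal.toReal_sum fun i _ => by
    simpa using ENNReal.mul_ne_top ENNReal.ofReal_ne_top (measure_ne_top (μ i) A)]
  simp [ENNReal.toReal_mul, ENNReal.toReal_ofReal (hβ _), measureReal_def]

theorem tv_mixture_lipschitz_general {X : Type*} [MeasurableSpace X]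
    (d : ℕ) (hd : 0 < d) (ε : ℝ) (hε : 0 < ε)
    (P : Fin d → Kernel X X) (hP : ∀ i, IsMarkovKernel (P i))
    (α α' : Fin d → ℝ)
    (hα : ∀ i, ε ≤ α i ∧ α i ≤ 1) (hαsum : ∑ i, α i = 1)
    (hα' : ∀ i, ε ≤ α' i ∧ α' i ≤ 1) (hα'sum : ∑ i, α' i = 1)
    (δ : ℝ)
    (hδ : δ = Finset.univ.sup' (univ_nonempty_iff.mpr ⟨⟨0, hd⟩⟩) fun i => |α i - α' i|) :
    (∀ x : X, ∀ A : Set X, MeasurableSet A →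
      |((∑ i, ENNReal.ofReal (α i) • (P i x)) A).toReal
        - ((∑ i, ENNReal.ofReal (α' i) • (P i x)) A).toReal| ≤ δ / (ε + δ))
    ∧ δ / (ε + δ) ≤ δ / ε := by
  have hdiff : ∀ i, |α i - α' i| ≤ δ := fun i => hδ ▸ le_sup' (fun i => |α i - α' i|) (mem_univ i)
  have hδ0 : 0 ≤ δ := (abs_nonneg _).trans (hdiff ⟨0, hd⟩)
  have hα0 : ∀ i, 0 ≤ α i := fun i => hε.le.trans (hα i).1
  have hα'0 : ∀ i, 0 ≤ α' i := fun i => hε.le.trans (hα' i).1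
  refine ⟨fun x A _ => ?_, div_le_div_of_nonneg_left hδ0 hε (by linarith)⟩
  have ht0 : ∀ i, 0 ≤ (P i x).real A := fun i => measureReal_nonneg
  have ht1 : ∀ i, (P i x).real A ≤ 1 := fun i => measureReal_le_one
  rw [toReal_sum_ofReal_smul_apply _ hα0, toReal_sum_ofReal_smul_apply _ hα'0, abs_sub_le_iff]
  exact ⟨sum_sub_mul_le_div hε.le hδ0 hα0 hαsum.le (fun i => (hα' i).1)
      (fun i => (le_abs_self _).trans (hdiff i)) ht0 ht1,
    sum_sub_mul_le_div hε.le hδ0 hα'0 hα'sum.le (fun i => (hα i).1)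
      (fun i => (le_abs_self _).trans (abs_sub_comm (α i) _ ▸ hdiff i)) ht0 ht1⟩

/-- TV bound between two mixtures of the same kernels with different weights. -/
theorem tv_mixture_lipschitz {X : Type*} [MeasurableSpace X]
    (d : ℕ) (hd : 0 < d) (ε : ℝ) (hε : 0 < ε) (hεd : ε ≤ 1 / d)
    (P : Fin d → Kernel X X) (hP : ∀ i, IsMarkovKernel (P i))
    (α α' : Fin d → ℝ)
    (hα : ∀ i, ε ≤ α i ∧ α i ≤ 1) (hαsum : ∑ i, α i = 1)
    (hα' : ∀ i, ε ≤ α' i ∧ α' i ≤ 1) (hα'sum : ∑ i, α' i = 1)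
    (δ : ℝ)
    (hδ : δ = Finset.univ.sup' (univ_nonempty_iff.mpr ⟨⟨0, hd⟩⟩) fun i => |α i - α' i|) :
    (∀ x : X, ∀ A : Set X, MeasurableSet A →
      |((∑ i, ENNReal.ofReal (α i) • (P i x)) A).toReal
        - ((∑ i, ENNReal.ofReal (α' i) • (P i x)) A).toReal| ≤ δ / (ε + δ))
    ∧ δ / (ε + δ) ≤ δ / ε :=
  tv_mixture_lipschitz_general d hd ε hε P hP α α' hα hαsum hα' hα'sum δ hδ
end

section
/- Let P be a reversible Markov kernel with stationary distribution π satisfying P^m(x,·) ≥ s μ(·) for all x ∈ X, where μ is a probability measure, m a positive integer, and s > 0. Then P is strongly uniformly ergodic with parameters ((⌊log(s/4)/log(1-s)⌋ + 2)m, s²/8): that is, P^{(⌊log(s/4)/log(1-s)⌋+2)m}(x,·) ≥ (s²/8) π(·) for every x ∈ X. -/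
open ProbabilityTheory MeasureTheory
open scoped ENNReal

/-!
Write `Q = P^m`, so that `Q x ≥ s μ` for every `x`. Doeblin's coupling argument gives
`Q^n(w, B) ≤ Q^n(z, B) + (1 - s)^n`, and averaging over `w ∼ π` gives
`π B ≤ Q^n(z, B) + (1 - s)^n`. Stationarity also gives `π ≥ s μ`, so `μ ≪ π` and the set `G`
where `dμ/dπ ≥ 1/2` has `π G ≥ s/2`; with `(1 - s)^K ≤ s/4` this makes `Q^K(y, G) ≥ s/4` for
every `y`. Reversibility of `Q^K` moves the mass between `A` and `G`:
`(s/4) π A ≤ ∫_A Q^K(·, G) dπ = ∫_G Q^K(·, A) dπ ≤ 2 ∫ Q^K(·, A) dμ`,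
and a final step of `Q ≥ s μ` yields `Q^(K+1)(x, A) ≥ (s²/8) π A`.
-/

/-- `kiter P n` is the `n`-step kernel `P^n`. -/
noncomputable def kiter {X : Type*} [MeasurableSpace X] (P : Kernel X X) : ℕ → Kernel X X
  | 0 => Kernel.id
  | n + 1 => P ∘ₖ kiter P n

section Iterates

variable {X : Type*} [MeasurableSpace X] (P : Kernel X X)

lemma kiter_zero : kiter P 0 = Kernel.id := rfl

lemma kiter_succ (n : ℕ) : kiter P (n + 1) = P ∘ₖ kiter P n := rfl

lemma kiter_succ' (n : ℕ) : kiter P (n + 1) = kiter P n ∘ₖ P := by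
  induction n with
  | zero => simp [kiter_succ, kiter_zero]
  | succ n ih => rw [kiter_succ, ih, ← Kernel.comp_assoc, ← kiter_succ, ih]

lemma kiter_add (a b : ℕ) : kiter P (a + b) = kiter P b ∘ₖ kiter P a := by
  induction b with
  | zero => simp [kiter_zero]
  | succ b ih => rw [← add_assoc, kiter_succ, ih, kiter_succ, Kernel.comp_assoc]

lemma kiter_kiter (m n : ℕ) : kiter (kiter P m) n = kiter P (n * m) := by
  induction n with
  | zero => simp [kiter_zero]
  | succ n ih => rw [kiter_succ, ih, Nat.succ_mul, kiter_add]

instance isMarkovKernel_kiter [IsMarkovKernel P] (n : ℕ) : IsMarkovKernel (kiter P n) := by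
  induction n with
  | zero => rw [kiter_zero]; infer_instance
  | succ n ih => rw [kiter_succ]; infer_instance

end Iterates

namespace ProbabilityTheory.Kernel

variable {X : Type*} [MeasurableSpace X]

section Reversible

variable {π : Measure X}

lemma isReversible_id : IsReversible Kernel.id π := by
  intro A B hA hB
  simp_rw [id_apply, Measure.dirac_apply' _ hA, Measure.dirac_apply' _ hB,
    lintegral_indicator_one hA, lintegral_indicator_one hB, Measure.restrict_apply hA,
    Measure.restrict_apply hB, Set.inter_comm]

variable [IsFiniteMeasure π]

lemma IsReversible.map_swap_compProd {K : Kernel X X} [IsFiniteKernel K]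
    (hK : IsReversible K π) : (π ⊗ₘ K).map Prod.swap = π ⊗ₘ K := by
  refine ext_of_generate_finite _ generateFrom_prod.symm isPiSystem_prod ?_ ?_
  · rintro _ ⟨A, hA, B, hB, rfl⟩
    rw [Measure.map_apply measurable_swap (hA.prod hB), Set.preimage_swap_prod,
      Measure.compProd_apply_prod hB hA, Measure.compProd_apply_prod hA hB, hK hB hA]
  · rw [Measure.map_apply measurable_swap .univ, Set.preimage_univ]

lemma IsReversible.lintegral_mul_lintegral_comm {K : Kernel X X} [IsFiniteKernel K]
    (hK : IsReversible K π) {f g : X → ℝ≥0∞} (hf : Measurable f) (hg : Measurable g) :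
    ∫⁻ x, f x * ∫⁻ y, g y ∂(K x) ∂π = ∫⁻ x, g x * ∫⁻ y, f y ∂(K x) ∂π := by
  have hfg : Measurable fun p : X × X => f p.1 * g p.2 :=
    (hf.comp measurable_fst).mul (hg.comp measurable_snd)
  have hgf : Measurable fun p : X × X => g p.1 * f p.2 :=
    (hg.comp measurable_fst).mul (hf.comp measurable_snd)
  calc ∫⁻ x, f x * ∫⁻ y, g y ∂(K x) ∂π
      = ∫⁻ p, f p.1 * g p.2 ∂(π ⊗ₘ K) := by
        simp_rw [Measure.lintegral_compProd hfg, lintegral_const_mul _ hg]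
    _ = ∫⁻ p, g p.1 * f p.2 ∂(π ⊗ₘ K) := by
        conv_lhs => rw [← hK.map_swap_compProd]
        rw [MeasureTheory.lintegral_map hfg measurable_swap]
        simp_rw [Prod.fst_swap, Prod.snd_swap, mul_comm]
    _ = ∫⁻ x, g x * ∫⁻ y, f y ∂(K x) ∂π := by
        simp_rw [Measure.lintegral_compProd hgf, lintegral_const_mul _ hf]

lemma IsReversible.setLIntegral_comp_apply {K L : Kernel X X} [IsFiniteKernel L]
    (hL : IsReversible L π) {A B : Set X} (hA : MeasurableSet A) (hB : MeasurableSet B)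
    (hKB : Measurable fun x => K x B) :
    ∫⁻ x in A, (K ∘ₖ L) x B ∂π = ∫⁻ x, K x B * L x A ∂π := by
  have hind : ∀ F : X → ℝ≥0∞, ∫⁻ x in A, F x ∂π = ∫⁻ x, A.indicator 1 x * F x ∂π := by
    intro F
    rw [← lintegral_indicator hA]
    congr 1 with x
    by_cases hx : x ∈ A <;> simp [hx]
  simp_rw [hind, comp_apply' _ _ _ hB,
    hL.lintegral_mul_lintegral_comm (measurable_one.indicator hA) hKB, lintegral_indicator_one hA]

lemma IsReversible.comp_of_comm {K L : Kernel X X} [IsFiniteKernel K] [IsFiniteKernel L]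
    (hK : IsReversible K π) (hL : IsReversible L π) (hKL : K ∘ₖ L = L ∘ₖ K) :
    IsReversible (K ∘ₖ L) π := by
  intro A B hA hB
  rw [hL.setLIntegral_comp_apply hA hB (K.measurable_coe hB), hKL,
    hK.setLIntegral_comp_apply hB hA (L.measurable_coe hA)]
  simp_rw [mul_comm]

lemma IsReversible.kiter {P : Kernel X X} [IsMarkovKernel P] (hP : IsReversible P π) (n : ℕ) :
    IsReversible (kiter P n) π := by
  induction n with
  | zero => exact isReversible_id
  | succ n ih => rw [kiter_succ]; exact hP.comp_of_comm ih (kiter_succ' P n ▸ kiter_succ P n)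

end Reversible

section Invariant

variable {κ : Kernel X X} {π : Measure X}

lemma Invariant.measure_eq_lintegral (hκ : Invariant κ π) {B : Set X} (hB : MeasurableSet B) :
    π B = ∫⁻ x, κ x B ∂π := by
  conv_lhs => rw [← hκ.def]
  exact Measure.bind_apply hB κ.aemeasurable

lemma Invariant.le_of_forall_le [IsProbabilityMeasure π] (hκ : Invariant κ π) {ν : Measure X}
    (hν : ∀ x, ν ≤ κ x) : ν ≤ π := by
  refine Measure.le_iff.2 fun B hB => ?_
  calc ν B = ∫⁻ _, ν B ∂π := by simp
    _ ≤ ∫⁻ x, κ x B ∂π := lintegral_mono fun x => (hν x) B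
    _ = π B := (hκ.measure_eq_lintegral hB).symm

end Invariant

end ProbabilityTheory.Kernel

section Doeblin

variable {X : Type*} [MeasurableSpace X] {Q : Kernel X X} [IsMarkovKernel Q]
  {μ : Measure X} [IsProbabilityMeasure μ] {c : ℝ≥0∞}

lemma lintegral_le_lintegral_add_of_forall_smul_le (hQ : ∀ x, c • μ ≤ Q x) {f : X → ℝ≥0∞}
    {δ : ℝ≥0∞} (hf : ∀ y y', f y ≤ f y' + δ) (w z : X) :
    ∫⁻ y, f y ∂(Q w) ≤ ∫⁻ y, f y ∂(Q z) + (1 - c) * δ := by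
  have : IsFiniteMeasure (c • μ) := isFiniteMeasure_of_le _ (hQ w)
  have hsplit : ∀ u, ∫⁻ y, f y ∂(Q u) = ∫⁻ y, f y ∂(Q u - c • μ) + ∫⁻ y, f y ∂(c • μ) :=
    fun u => by rw [← lintegral_add_measure, Measure.sub_add_cancel_of_le (hQ u)]
  have hmass : ∀ u, (Q u - c • μ) Set.univ = 1 - c := fun u => by
    rw [Measure.sub_apply .univ (hQ u), Measure.smul_apply, measure_univ, measure_univ,
      smul_eq_mul, mul_one]
  have hupper : ∀ y, f y ≤ (⨅ y', f y') + δ := fun y => by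
    rw [ENNReal.iInf_add]
    exact le_iInf (hf y)
  calc ∫⁻ y, f y ∂(Q w)
      ≤ ∫⁻ _, (⨅ y', f y') + δ ∂(Q w - c • μ) + ∫⁻ y, f y ∂(c • μ) := by
        rw [hsplit w]
        gcongr with y
        exact hupper y
    _ = ∫⁻ _, ⨅ y', f y' ∂(Q z - c • μ) + ∫⁻ y, f y ∂(c • μ) + (1 - c) * δ := by
        simp only [lintegral_const, hmass]
        ring
    _ ≤ ∫⁻ y, f y ∂(Q z) + (1 - c) * δ := by
        rw [hsplit z]
        gcongr with y
        exact iInf_le f y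

lemma kiter_apply_le_kiter_apply_add (hQ : ∀ x, c • μ ≤ Q x) (n : ℕ) (w z : X) {B : Set X}
    (hB : MeasurableSet B) : kiter Q n w B ≤ kiter Q n z B + (1 - c) ^ n := by
  induction n generalizing w z with
  | zero => simpa [kiter_zero] using prob_le_one.trans le_add_self
  | succ n ih =>
    simp_rw [kiter_succ', Kernel.comp_apply' _ _ _ hB, pow_succ']
    exact lintegral_le_lintegral_add_of_forall_smul_le hQ ih w z

lemma measure_le_kiter_apply_add {π : Measure X} [IsProbabilityMeasure π]
    (hQ : ∀ x, c • μ ≤ Q x) {n : ℕ} (hπ : (kiter Q n).Invariant π) (z : X) {B : Set X}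
    (hB : MeasurableSet B) :
    π B ≤ kiter Q n z B + (1 - c) ^ n :=
  calc π B = ∫⁻ w, kiter Q n w B ∂π := hπ.measure_eq_lintegral hB
    _ ≤ ∫⁻ _, kiter Q n z B + (1 - c) ^ n ∂π :=
      lintegral_mono fun w => kiter_apply_le_kiter_apply_add hQ n w z hB
    _ = kiter Q n z B + (1 - c) ^ n := by rw [lintegral_const, measure_univ, mul_one]

end Doeblin

section RadonNikodym

variable {X : Type*} [MeasurableSpace X] {μ π : Measure X}

lemma one_sub_le_measure_setOf_le_rnDeriv [IsProbabilityMeasure μ] [IsProbabilityMeasure π]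
    (hμπ : μ ≪ π) (c : ℝ≥0∞) : 1 - c ≤ μ {y | c ≤ μ.rnDeriv π y} := by
  have hG : MeasurableSet {y | c ≤ μ.rnDeriv π y} :=
    measurableSet_le measurable_const (Measure.measurable_rnDeriv μ π)
  have hGc : μ {y | c ≤ μ.rnDeriv π y}ᶜ ≤ c :=
    calc μ {y | c ≤ μ.rnDeriv π y}ᶜ = ∫⁻ y in {y | c ≤ μ.rnDeriv π y}ᶜ, μ.rnDeriv π y ∂π :=
          (Measure.setLIntegral_rnDeriv hμπ _).symm
      _ ≤ ∫⁻ _ in {y | c ≤ μ.rnDeriv π y}ᶜ, c ∂π :=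
          setLIntegral_mono' hG.compl fun y hy => le_of_not_ge hy
      _ ≤ c := by rw [setLIntegral_const]; exact mul_le_of_le_one_right' prob_le_one
  calc 1 - c ≤ 1 - μ {y | c ≤ μ.rnDeriv π y}ᶜ := tsub_le_tsub_left hGc 1
    _ = μ {y | c ≤ μ.rnDeriv π y} := by
      rw [prob_compl_eq_one_sub hG, ENNReal.sub_sub_cancel ENNReal.one_ne_top prob_le_one]

lemma mul_setLIntegral_setOf_le_rnDeriv_le (c : ℝ≥0∞) {f : X → ℝ≥0∞} (hf : Measurable f) :
    c * ∫⁻ y in {y | c ≤ μ.rnDeriv π y}, f y ∂π ≤ ∫⁻ y, f y ∂μ := by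
  have hd := Measure.measurable_rnDeriv μ π
  calc c * ∫⁻ y in {y | c ≤ μ.rnDeriv π y}, f y ∂π
      ≤ ∫⁻ y in {y | c ≤ μ.rnDeriv π y}, μ.rnDeriv π y * f y ∂π :=
        (lintegral_const_mul_le _ _).trans
          (setLIntegral_mono' (measurableSet_le measurable_const hd) fun _ hy => by gcongr; exact hy)
    _ ≤ ∫⁻ y, μ.rnDeriv π y * f y ∂π := setLIntegral_le_lintegral _ _
    _ = ∫⁻ y, f y ∂(π.withDensity (μ.rnDeriv π)) :=
        (lintegral_withDensity_eq_lintegral_mul π hd hf).symm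
    _ ≤ ∫⁻ y, f y ∂μ := lintegral_mono' (Measure.withDensity_rnDeriv_le μ π) le_rfl

end RadonNikodym

section Ergodicity

variable {X : Type*} [MeasurableSpace X] {Q : Kernel X X} [IsMarkovKernel Q]
  {π μ : Measure X} [IsProbabilityMeasure π] [IsProbabilityMeasure μ] {c : ℝ≥0∞}

lemma mul_measure_le_kiter_succ_apply (hQ : Q.IsReversible π) (hc : c ≠ 0)
    (hμ : ∀ x, c • μ ≤ Q x) (n : ℕ) (x : X) {A : Set X} (hA : MeasurableSet A) :
    c / 2 * (c / 2 - (1 - c) ^ n) * π A ≤ kiter Q (n + 1) x A := by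
  set G := {y | 2⁻¹ ≤ μ.rnDeriv π y}
  have hG : MeasurableSet G := measurableSet_le measurable_const (Measure.measurable_rnDeriv μ π)
  have hcμπ : c • μ ≤ π := hQ.invariant.le_of_forall_le hμ
  have hμπ : μ ≪ π :=
    (Measure.absolutelyContinuous_smul hc).trans (Measure.absolutelyContinuous_of_le hcμπ)
  have hπG : c / 2 ≤ π G :=
    calc c / 2 = c * (1 - 2⁻¹) := by rw [ENNReal.one_sub_inv_two, div_eq_mul_inv]
      _ ≤ (c • μ) G := mul_le_mul_right (one_sub_le_measure_setOf_le_rnDeriv hμπ 2⁻¹) c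
      _ ≤ π G := hcμπ G
  have hQG : ∀ y, c / 2 - (1 - c) ^ n ≤ kiter Q n y G := fun y =>
    tsub_le_iff_right.2 (hπG.trans (measure_le_kiter_apply_add hμ (hQ.kiter n).invariant y hG))
  have hQA : Measurable fun y => kiter Q n y A := (kiter Q n).measurable_coe hA
  calc c / 2 * (c / 2 - (1 - c) ^ n) * π A
      = c * (2⁻¹ * ∫⁻ _ in A, c / 2 - (1 - c) ^ n ∂π) := by
        rw [setLIntegral_const, div_eq_mul_inv]
        ring
    _ ≤ c * (2⁻¹ * ∫⁻ y in A, kiter Q n y G ∂π) := by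
        gcongr with y
        exact hQG y
    _ = c * (2⁻¹ * ∫⁻ y in G, kiter Q n y A ∂π) := by rw [hQ.kiter n hA hG]
    _ ≤ c * ∫⁻ y, kiter Q n y A ∂μ := by
        gcongr
        exact mul_setLIntegral_setOf_le_rnDeriv_le _ hQA
    _ = ∫⁻ y, kiter Q n y A ∂(c • μ) := by rw [lintegral_smul_measure, smul_eq_mul]
    _ ≤ ∫⁻ y, kiter Q n y A ∂(Q x) := lintegral_mono' (hμ x) le_rfl
    _ = kiter Q (n + 1) x A := by rw [kiter_succ', Kernel.comp_apply' _ _ _ hA]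

end Ergodicity

lemma pow_le_of_log_div_log_le {a b : ℝ} (ha₀ : 0 < a) (ha₁ : a < 1) (hb : 0 < b) {n : ℕ}
    (hn : Real.log b / Real.log a ≤ n) : a ^ n ≤ b :=
  (Real.pow_le_iff_le_log ha₀ hb).2 ((div_le_iff_of_neg (Real.log_neg ha₀ ha₁)).1 hn)

lemma le_toNat_floor_add_one (x : ℝ) : x ≤ (⌊x⌋.toNat + 1 : ℕ) := by
  rw [Int.floor_toNat]
  exact_mod_cast (Nat.lt_floor_add_one x).le

lemma ENNReal.ofReal_sq_div_eight_le {s : ℝ} (hs₀ : 0 < s) (hs₁ : s ≤ 1) {n : ℕ}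
    (hn : (1 - s) ^ n ≤ s / 4) :
    ENNReal.ofReal (s ^ 2 / 8) ≤
      ENNReal.ofReal s / 2 * (ENNReal.ofReal s / 2 - (1 - ENNReal.ofReal s) ^ n) := by
  calc ENNReal.ofReal (s ^ 2 / 8)
      = ENNReal.ofReal (s / 2) * (ENNReal.ofReal (s / 2) - ENNReal.ofReal (s / 4)) := by
        rw [← ENNReal.ofReal_sub _ (by positivity), ← ENNReal.ofReal_mul (by positivity)]
        ring_nf
    _ ≤ ENNReal.ofReal (s / 2) * (ENNReal.ofReal (s / 2) - (1 - ENNReal.ofReal s) ^ n) := by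
        rw [← ENNReal.ofReal_one, ← ENNReal.ofReal_sub _ hs₀.le,
          ← ENNReal.ofReal_pow (by linarith)]
        gcongr
    _ = _ := by rw [ENNReal.ofReal_div_of_pos two_pos, ENNReal.ofReal_ofNat]

theorem reversible_minorization_strongly_uniformly_ergodic_general {X : Type*} [MeasurableSpace X]
    (P : Kernel X X) [IsMarkovKernel P]
    (π : Measure X) [IsProbabilityMeasure π]
    (hrev : ∀ A B : Set X, MeasurableSet A → MeasurableSet B →
      ∫⁻ x in A, P x B ∂π = ∫⁻ x in B, P x A ∂π)
    (s : ℝ) (hs0 : 0 < s) (hs1 : s < 1) (m : ℕ)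
    (μ : Measure X) [IsProbabilityMeasure μ]
    (hminor : ∀ x : X, ∀ A : Set X, MeasurableSet A →
      ENNReal.ofReal s * μ A ≤ kiter P m x A) :
    ∀ x : X, ∀ A : Set X, MeasurableSet A →
      ENNReal.ofReal (s ^ 2 / 8) * π A ≤
        kiter P (((⌊Real.log (s / 4) / Real.log (1 - s)⌋).toNat + 2) * m) x A := by
  intro x A hA
  set k := (⌊Real.log (s / 4) / Real.log (1 - s)⌋).toNat
  have hQ : Kernel.IsReversible (kiter P m) π := Kernel.IsReversible.kiter (fun A B => hrev A B) m
  have hμ : ∀ y, ENNReal.ofReal s • μ ≤ kiter P m y := fun y =>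
    Measure.le_iff.2 fun B hB => hminor y B hB
  have hpow : (1 - s) ^ (k + 1) ≤ s / 4 :=
    pow_le_of_log_div_log_le (by linarith) (by linarith) (by positivity) (le_toNat_floor_add_one _)
  calc ENNReal.ofReal (s ^ 2 / 8) * π A
      ≤ ENNReal.ofReal s / 2 * (ENNReal.ofReal s / 2 - (1 - ENNReal.ofReal s) ^ (k + 1))
          * π A := by
        gcongr ?_ * _
        exact ENNReal.ofReal_sq_div_eight_le hs0 hs1.le hpow
    _ ≤ kiter (kiter P m) (k + 1 + 1) x A :=
        mul_measure_le_kiter_succ_apply hQ (ENNReal.ofReal_pos.2 hs0).ne' hμ (k + 1) x hA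
    _ = kiter P ((k + 2) * m) x A := by rw [kiter_kiter]

/-- A reversible kernel with a minorization `P^m(x,·) ≥ s μ(·)` is
`((⌊log(s/4)/log(1-s)⌋+2)m, s²/8)`-strongly uniformly ergodic. -/
theorem reversible_minorization_strongly_uniformly_ergodic {X : Type*} [MeasurableSpace X]
    (P : Kernel X X) [IsMarkovKernel P]
    (π : Measure X) [IsProbabilityMeasure π]
    (hstat : ∀ A : Set X, MeasurableSet A → π A = ∫⁻ x, P x A ∂π)
    (hrev : ∀ A B : Set X, MeasurableSet A → MeasurableSet B →
      ∫⁻ x in A, P x B ∂π = ∫⁻ x in B, P x A ∂π)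
    (s : ℝ) (hs0 : 0 < s) (hs1 : s < 1) (m : ℕ) (hm : 0 < m)
    (μ : Measure X) [IsProbabilityMeasure μ]
    (hminor : ∀ x : X, ∀ A : Set X, MeasurableSet A →
      ENNReal.ofReal s * μ A ≤ kiter P m x A) :
    ∀ x : X, ∀ A : Set X, MeasurableSet A →
      ENNReal.ofReal (s ^ 2 / 8) * π A ≤
        kiter P (((⌊Real.log (s / 4) / Real.log (1 - s)⌋).toNat + 2) * m) x A :=
  reversible_minorization_strongly_uniformly_ergodic_general P π hrev s hs0 hs1 m μ hminor
end

section
/- Define q_n(k) = p^k·Z_n^{-1} for k ≠ n and q_n(n) = p^{2n}·Z_n^{-1}, where Z_n = 1/(1-p) - p^n + p^{2n} and p ∈ (0,1), a probability mass function on {0,1,2,...}. Then sup_j ‖Q_{n+1}(j,·) - Q_n(j,·)‖_TV → 0 as n → ∞, where Q_n(j,·) has pmf q_n independent of j. -/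
/-!
Every `q_n` is close in `ℓ¹` to the geometric pmf `g(k) = (1 - p) p^k`: off the bump at `k = n`,
`q_n(k) - g(k) = p^k (Z_n⁻¹ - (1 - p))`, and the bump itself has mass `O(p^n)`. Since
`Z_n → 1 / (1 - p)`, the `ℓ¹` distance from `q_n` to `g` tends to `0`, and the triangle inequality
through `g` bounds the distance between `q_{n+1}` and `q_n`.
-/

open Filter Topology

noncomputable def normConst (p : ℝ) (n : ℕ) : ℝ :=
  1 / (1 - p) - p ^ n + p ^ (2 * n)

noncomputable def proposalPmf (p : ℝ) (n k : ℕ) : ℝ :=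
  if k = n then p ^ (2 * n) / normConst p n else p ^ k / normConst p n

theorem tendsto_tsum_abs_sub_succ_of_dominated {f : ℕ → ℕ → ℝ} {g : ℕ → ℝ} {b : ℕ → ℕ → ℝ}
    (hb : ∀ n, Summable (b n)) (hfg : ∀ n k, |f n k - g k| ≤ b n k)
    (hlim : Tendsto (fun n => ∑' k, b n k) atTop (𝓝 0)) :
    Tendsto (fun n => ∑' k, |f (n + 1) k - f n k|) atTop (𝓝 0) := by
  have hle : ∀ n k, |f (n + 1) k - f n k| ≤ b (n + 1) k + b n k := fun n k =>
    calc |f (n + 1) k - f n k| ≤ |f (n + 1) k - g k| + |g k - f n k| := abs_sub_le _ _ _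
      _ = |f (n + 1) k - g k| + |f n k - g k| := by rw [abs_sub_comm (g k)]
      _ ≤ b (n + 1) k + b n k := add_le_add (hfg _ k) (hfg n k)
  have hsum : ∀ n, Summable fun k => |f (n + 1) k - f n k| := fun n =>
    ((hb (n + 1)).add (hb n)).of_nonneg_of_le (fun _ => abs_nonneg _) (hle n)
  refine squeeze_zero (fun n => tsum_nonneg fun _ => abs_nonneg _) (fun n => ?_)
    (by simpa using (hlim.comp (tendsto_add_atTop_nat 1)).add hlim)
  calc ∑' k, |f (n + 1) k - f n k| ≤ ∑' k, (b (n + 1) k + b n k) :=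
        (hsum n).tsum_le_tsum (hle n) ((hb (n + 1)).add (hb n))
    _ = ∑' k, b (n + 1) k + ∑' k, b n k := (hb (n + 1)).tsum_add (hb n)

section GeometricBump

variable {r : ℝ}

theorem hasSum_pow_mul_add_ite (hr0 : 0 ≤ r) (hr1 : r < 1) (c e : ℕ → ℝ) (n : ℕ) :
    HasSum (fun k => r ^ k * c n + if k = n then e n else 0) ((1 - r)⁻¹ * c n + e n) :=
  ((hasSum_geometric_of_lt_one hr0 hr1).mul_right (c n)).add (hasSum_ite_eq n (e n))

theorem tendsto_tsum_pow_mul_add_ite (hr0 : 0 ≤ r) (hr1 : r < 1) {c e : ℕ → ℝ}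
    (hc : Tendsto c atTop (𝓝 0)) (he : Tendsto e atTop (𝓝 0)) :
    Tendsto (fun n => ∑' k, (r ^ k * c n + if k = n then e n else 0)) atTop (𝓝 0) := by
  simp_rw [(hasSum_pow_mul_add_ite hr0 hr1 c e _).tsum_eq]
  simpa using (hc.const_mul _).add he

end GeometricBump

section Proposal

variable {p : ℝ}

theorem abs_proposalPmf_sub_geometric_le (n k : ℕ) :
    |proposalPmf p n k - (1 - p) * p ^ k| ≤
      |p| ^ k * |(normConst p n)⁻¹ - (1 - p)| +
        if k = n then |(p ^ (2 * n) - p ^ n) / normConst p n| else 0 := by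
  unfold proposalPmf
  split_ifs with hk
  · subst hk
    calc |p ^ (2 * k) / normConst p k - (1 - p) * p ^ k|
        = |p ^ k * ((normConst p k)⁻¹ - (1 - p)) + (p ^ (2 * k) - p ^ k) / normConst p k| := by
          congr 1; ring
      _ ≤ _ := by rw [← abs_pow, ← abs_mul]; exact abs_add_le _ _
  · rw [add_zero, ← abs_pow, ← abs_mul]
    exact (congrArg abs (by ring)).le

theorem tendsto_normConst (hp : |p| < 1) : Tendsto (normConst p) atTop (𝓝 (1 / (1 - p))) := by
  have hpow : Tendsto (fun n : ℕ => p ^ n) atTop (𝓝 0) :=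
    tendsto_pow_atTop_nhds_zero_of_abs_lt_one hp
  have hpow2 : Tendsto (fun n : ℕ => p ^ (2 * n)) atTop (𝓝 0) :=
    hpow.comp (tendsto_id.const_mul_atTop' two_pos)
  unfold normConst
  simpa only [sub_zero, add_zero] using
    ((tendsto_const_nhds (x := 1 / (1 - p))).sub hpow).add hpow2

theorem tendsto_abs_inv_normConst_sub (hp : |p| < 1) :
    Tendsto (fun n => |(normConst p n)⁻¹ - (1 - p)|) atTop (𝓝 0) := by
  have hne : 1 / (1 - p) ≠ 0 := one_div_ne_zero (by linarith [le_abs_self p])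
  simpa using (((tendsto_normConst hp).inv₀ hne).sub_const (1 - p)).abs

theorem tendsto_abs_bump_mass (hp : |p| < 1) :
    Tendsto (fun n => |(p ^ (2 * n) - p ^ n) / normConst p n|) atTop (𝓝 0) := by
  have hne : 1 / (1 - p) ≠ 0 := one_div_ne_zero (by linarith [le_abs_self p])
  have hnum : Tendsto (fun n : ℕ => p ^ (2 * n) - p ^ n) atTop (𝓝 0) := by
    simpa only [sub_self] using
      ((tendsto_normConst hp).sub_const (1 / (1 - p))).congr fun n => by unfold normConst; ring
  simpa using (hnum.div (tendsto_normConst hp) hne).abs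

end Proposal

/-- Diminishing adaptation of the counterexample independence proposals:
`sup_j ‖Q_{n+1}(j,·) - Q_n(j,·)‖_TV = (1/2) Σ_k |q_{n+1}(k) - q_n(k)| → 0`. -/
theorem counterexample_proposals_diminishing (p : ℝ) (hp0 : 0 < p) (hp1 : p < 1)
    (Z : ℕ → ℝ) (hZ : ∀ n, Z n = 1 / (1 - p) - p ^ n + p ^ (2 * n))
    (q : ℕ → ℕ → ℝ)
    (hq : ∀ n k, q n k = if k = n then p ^ (2 * n) / Z n else p ^ k / Z n) :
    Tendsto (fun n => (1 / 2) * ∑' k : ℕ, |q (n + 1) k - q n k|) atTop (nhds 0) := by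
  have hp : |p| < 1 := abs_lt.2 ⟨by linarith, hp1⟩
  obtain rfl : Z = normConst p := funext hZ
  obtain rfl : q = proposalPmf p := funext₂ hq
  simpa only [mul_zero] using
    (tendsto_tsum_abs_sub_succ_of_dominated
      (fun n => (hasSum_pow_mul_add_ite (abs_nonneg p) hp _ _ n).summable)
      abs_proposalPmf_sub_geometric_le
      (tendsto_tsum_pow_mul_add_ite (abs_nonneg p) hp (tendsto_abs_inv_normConst_sub hp)
        (tendsto_abs_bump_mass hp))).const_mul (1 / 2)
end

section
/- With q_n as above (q_n(k) = p^k/Z_n for k≠n, q_n(n) = p^{2n}/Z_n, Z_n = 1/(1-p) - p^n + p^{2n}, p ∈ (0,1)) and target π(k) = p^k(1-p) on {0,1,2,...}, let P_n be the independence Metropolis kernel with proposal q_n. Then P_{n+1}(n,{0}) - P_n(n,{0}) = q_{n+1}(0) - q_n(0)·p^n, and this quantity converges to 1 - p ≠ 0 as n → ∞. Hence sup_j ‖P_{n+1}(j,·)-P_n(j,·)‖_TV does not converge to 0. -/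
/-!
Since `π 0 / π n = p⁻ⁿ`, the second argument of the minimum in `P_{n+1}(n, {0})` equals
`p^n / Z_{n+1} · p⁻ⁿ = 1 / Z_{n+1} = q_{n+1}(0)`, whereas in `P_n(n, {0})` the inflated weight
`p^{2n}` of the current state makes it `p^n / Z_n ≤ q_n(0)`. Hence the difference is
`1 / Z_{n+1} - p^n / Z_n`, and `Z_n → 1 / (1 - p)` sends it to `1 - p`.
-/

open Filter Topology

namespace IndependenceMetropolis

noncomputable section

def normalizer (p : ℝ) (n : ℕ) : ℝ := 1 / (1 - p) - p ^ n + p ^ (2 * n)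

def proposal (p : ℝ) (n k : ℕ) : ℝ :=
  if k = n then p ^ (2 * n) / normalizer p n else p ^ k / normalizer p n

def target (p : ℝ) (k : ℕ) : ℝ := p ^ k * (1 - p)

/-- `P_m(n, {0})` for the independence Metropolis kernel with proposal `q_m`: the move is proposed
with probability `q_m 0` and accepted with probability `min 1 (π 0 q_m n / (π n q_m 0))`. -/
def probToZero (p : ℝ) (m n : ℕ) : ℝ :=
  min (proposal p m 0) (target p 0 / target p n * proposal p m n)

end

variable {p : ℝ}

lemma normalizer_pos (hp0 : 0 ≤ p) (hp1 : p < 1) (n : ℕ) : 0 < normalizer p n := by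
  have h_one_le : 1 ≤ 1 / (1 - p) := by rw [le_div_iff₀ (by linarith)]; linarith
  have h_quad : 0 < 1 - p ^ n + (p ^ n) ^ 2 := by nlinarith [sq_nonneg (p ^ n - 1 / 2)]
  rw [normalizer, mul_comm, pow_mul]
  linarith

lemma tendsto_normalizer (hp0 : 0 ≤ p) (hp1 : p < 1) :
    Tendsto (normalizer p) atTop (𝓝 (1 / (1 - p))) := by
  have h_pow := tendsto_pow_atTop_nhds_zero_of_lt_one hp0 hp1
  have h_pow_two_mul : Tendsto (fun n : ℕ => p ^ (2 * n)) atTop (𝓝 0) := by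
    simp only [pow_mul]
    exact tendsto_pow_atTop_nhds_zero_of_lt_one (sq_nonneg p) (by nlinarith)
  have h_lim := ((tendsto_const_nhds (x := 1 / (1 - p))).sub h_pow).add h_pow_two_mul
  rw [sub_zero, add_zero] at h_lim
  exact h_lim

lemma proposal_zero (n : ℕ) : proposal p n 0 = 1 / normalizer p n := by
  unfold proposal
  split_ifs with h
  · simp [← h]
  · simp

lemma target_zero_div_target (hp1 : p ≠ 1) (n : ℕ) : target p 0 / target p n = (p ^ n)⁻¹ := by
  have : 1 - p ≠ 0 := sub_ne_zero.2 hp1.symm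
  simp [target, div_mul_cancel_right₀ this]

lemma probToZero_succ (hp0 : p ≠ 0) (hp1 : p ≠ 1) (n : ℕ) :
    probToZero p (n + 1) n = 1 / normalizer p (n + 1) := by
  have h_ratio : target p 0 / target p n * proposal p (n + 1) n = 1 / normalizer p (n + 1) := by
    rw [target_zero_div_target hp1, proposal, if_neg n.succ_ne_self.symm]
    field_simp
  rw [probToZero, h_ratio, proposal_zero, min_self]

lemma probToZero_self (hp0 : 0 < p) (hp1 : p < 1) (n : ℕ) :
    probToZero p n n = p ^ n / normalizer p n := by
  have h_ratio : target p 0 / target p n * proposal p n n = p ^ n / normalizer p n := by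
    rw [target_zero_div_target hp1.ne, proposal, if_pos rfl, two_mul, pow_add]
    field_simp
  have h_le : p ^ n / normalizer p n ≤ 1 / normalizer p n :=
    div_le_div_of_nonneg_right (pow_le_one₀ hp0.le hp1.le) (normalizer_pos hp0.le hp1 n).le
  rw [probToZero, h_ratio, proposal_zero, min_eq_right h_le]

lemma probToZero_succ_sub_self (hp0 : 0 < p) (hp1 : p < 1) (n : ℕ) :
    probToZero p (n + 1) n - probToZero p n n = proposal p (n + 1) 0 - proposal p n 0 * p ^ n := by
  rw [probToZero_succ hp0.ne' hp1.ne, probToZero_self hp0 hp1, proposal_zero, proposal_zero]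
  ring

lemma tendsto_probToZero_succ_sub_self (hp0 : 0 < p) (hp1 : p < 1) :
    Tendsto (fun n => probToZero p (n + 1) n - probToZero p n n) atTop (𝓝 (1 - p)) := by
  have h_ne : 1 / (1 - p) ≠ 0 := one_div_ne_zero (sub_ne_zero.2 hp1.ne')
  have h_inv := (tendsto_normalizer hp0.le hp1).inv₀ h_ne
  have h_succ : Tendsto (fun n => 1 / normalizer p (n + 1)) atTop (𝓝 (1 - p)) := by
    simpa [Function.comp_def] using h_inv.comp (tendsto_add_atTop_nat 1)
  have h_self : Tendsto (fun n => p ^ n / normalizer p n) atTop (𝓝 0) := by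
    simpa [div_eq_mul_inv] using (tendsto_pow_atTop_nhds_zero_of_lt_one hp0.le hp1).mul h_inv
  simpa [probToZero_succ hp0.ne' hp1.ne, probToZero_self hp0 hp1] using h_succ.sub h_self

end IndependenceMetropolis

open IndependenceMetropolis

/-- The counterexample independence Metropolis kernels do not exhibit diminishing
adaptation: `P_{n+1}(n,{0}) - P_n(n,{0}) = q_{n+1}(0) - q_n(0) pⁿ → 1 - p ≠ 0`. -/
theorem counterexample_kernels_not_diminishing (p : ℝ) (hp0 : 0 < p) (hp1 : p < 1)
    (Z : ℕ → ℝ) (hZ : ∀ n, Z n = 1 / (1 - p) - p ^ n + p ^ (2 * n))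
    (q : ℕ → ℕ → ℝ)
    (hq : ∀ n k, q n k = if k = n then p ^ (2 * n) / Z n else p ^ k / Z n)
    (π : ℕ → ℝ) (hπ : ∀ k, π k = p ^ k * (1 - p)) :
    (∀ n : ℕ,
        min (q (n + 1) 0) (π 0 / π n * q (n + 1) n)
          - min (q n 0) (π 0 / π n * q n n)
        = q (n + 1) 0 - q n 0 * p ^ n) ∧
    Tendsto (fun n : ℕ =>
        min (q (n + 1) 0) (π 0 / π n * q (n + 1) n)
          - min (q n 0) (π 0 / π n * q n n)) atTop (nhds (1 - p)) ∧
    (1 - p ≠ 0) ∧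
    ¬ Tendsto (fun n : ℕ =>
        min (q (n + 1) 0) (π 0 / π n * q (n + 1) n)
          - min (q n 0) (π 0 / π n * q n n)) atTop (nhds 0) := by
  obtain rfl : Z = normalizer p := funext hZ
  obtain rfl : q = proposal p := funext fun n => funext (hq n)
  obtain rfl : π = target p := funext hπ
  have h_lim := tendsto_probToZero_succ_sub_self hp0 hp1
  have h_ne : 1 - p ≠ 0 := sub_ne_zero.2 hp1.ne'
  exact ⟨probToZero_succ_sub_self hp0 hp1, h_lim, h_ne,
    fun h_zero => h_ne (tendsto_nhds_unique h_lim h_zero)⟩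
end

section
/- Define b_1 = 1000 and b_n = b_{n-1}(1 + 1/(10 + log n)) for n ≥ 2, and let p_n := exp(-b_n / (2(10 + log n)²)). Then Σ_{n=1}^∞ p_n < ∞. -/
/-!
Write `ℓ n = 10 + log n`, which is increasing. Unrolling the recursion,
`b n ≥ 1000 (1 + ∑_{i=2}^n 1/ℓ i) ≥ 1000 (1 + (n - 1)/ℓ n) ≥ 1000 n/ℓ n`,
so the exponent `b n / (2 ℓ n²)` is at least `500 n/ℓ n³`. Since `log n · ℓ n³` is a polynomial
in `log n`, it is `o(n)`, so eventually the exponent exceeds `2 log n` and `p n ≤ n⁻²`.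
-/

open Real Filter Asymptotics

theorem mul_one_add_sub_one_div_le_of_recurrence {ℓ b : ℕ → ℝ} (hℓ : Monotone ℓ)
    (hℓpos : ∀ n, 0 < ℓ n) (hb1 : 0 ≤ b 1)
    (hrec : ∀ n, 1 ≤ n → b n * (1 + 1 / ℓ (n + 1)) ≤ b (n + 1))
    {n : ℕ} (hn : 1 ≤ n) : b 1 * (1 + ((n : ℝ) - 1) / ℓ n) ≤ b n := by
  induction n, hn using Nat.le_induction with
  | base => simp
  | succ n hn ih =>
    have hn' : (0 : ℝ) ≤ n - 1 := sub_nonneg.mpr (by exact_mod_cast hn)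
    set L := ℓ (n + 1)
    have hL : 0 < L := hℓpos _
    have expand : (1 + ((n : ℝ) - 1) / L) * (1 + 1 / L) = 1 + n / L + (n - 1) / L ^ 2 := by
      field_simp; ring
    calc b 1 * (1 + (((n + 1 : ℕ) : ℝ) - 1) / L)
        ≤ b 1 * ((1 + ((n : ℝ) - 1) / L) * (1 + 1 / L)) := by
          rw [expand, Nat.cast_add_one, add_sub_cancel_right]
          exact mul_le_mul_of_nonneg_left (le_add_of_nonneg_right (by positivity)) hb1
      _ ≤ b 1 * (1 + ((n : ℝ) - 1) / ℓ n) * (1 + 1 / L) := by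
          rw [← mul_assoc]; gcongr; exacts [hℓpos n, hℓ n.le_succ]
      _ ≤ b n * (1 + 1 / L) := by gcongr
      _ ≤ b (n + 1) := hrec n hn

theorem isLittleO_log_mul_const_add_log_pow_id (a : ℝ) (k : ℕ) :
    (fun x => log x * (a + log x) ^ k) =o[atTop] id := by
  have hadd : (fun x => a + log x) =O[atTop] log :=
    isLittleO_const_log_atTop.isBigO.add (isBigO_refl _ _)
  have hmul := (isBigO_refl log atTop).mul (hadd.pow k)
  refine hmul.trans_isLittleO ?_
  simpa only [← pow_succ'] using isLittleO_pow_log_id_atTop (n := k + 1)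

theorem summable_exp_of_eventually_le_neg_mul_log {f : ℕ → ℝ} {p : ℝ} (hp : 1 < p)
    (hf : ∀ᶠ n in atTop, f n ≤ -p * log n) : Summable fun n => exp (f n) := by
  refine (summable_nat_rpow.mpr (neg_lt_neg hp)).of_norm_bounded_eventually_nat ?_
  filter_upwards [hf, eventually_gt_atTop 0] with n hfn hn
  rw [norm_of_nonneg (exp_pos _).le, rpow_def_of_pos (by exact_mod_cast hn)]
  exact exp_le_exp.mpr (by linarith)

theorem Real.monotone_log_natCast : Monotone fun n : ℕ => log n := by
  intro m n hmn
  rcases m.eq_zero_or_pos with rfl | hm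
  · simpa using log_natCast_nonneg n
  · exact log_le_log (by exact_mod_cast hm) (by exact_mod_cast hmn)

/-- Summability of `p_n = exp(-b_n / (2(10 + log n)²))` where `b_1 = 1000` and
`b_n = b_{n-1}(1 + 1/(10 + log n))`. -/
theorem summable_counterexample_p (b : ℕ → ℝ)
    (hb1 : b 1 = 1000)
    (hbn : ∀ n, 2 ≤ n → b n = b (n - 1) * (1 + 1 / (10 + Real.log n))) :
    Summable (fun n : ℕ => Real.exp (-(b n) / (2 * (10 + Real.log n) ^ 2))) := by
  set ℓ : ℕ → ℝ := fun n => 10 + log n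
  have hℓ10 (n : ℕ) : 10 ≤ ℓ n := le_add_of_nonneg_right (log_natCast_nonneg n)
  have hℓpos (n : ℕ) : 0 < ℓ n := by linarith [hℓ10 n]
  have hlower {n : ℕ} (hn : 1 ≤ n) : 1000 * n / ℓ n ≤ b n := by
    have h := mul_one_add_sub_one_div_le_of_recurrence (monotone_log_natCast.const_add 10)
      hℓpos (by rw [hb1]; norm_num) (fun n _ => (hbn (n + 1) (by omega)).ge) hn
    refine le_trans ?_ (hb1 ▸ h)
    rw [div_le_iff₀ (hℓpos n), mul_assoc, add_mul, div_mul_cancel₀ _ (hℓpos n).ne']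
    linarith [hℓ10 n]
  have hlog : ∀ᶠ n : ℕ in atTop, log n * ℓ n ^ 3 ≤ 250 * n := by
    have := (isLittleO_log_mul_const_add_log_pow_id 10 3).bound (by norm_num : (0 : ℝ) < 250)
    filter_upwards [tendsto_natCast_atTop_atTop.eventually this] with n hn
    rwa [norm_of_nonneg (by positivity), id, norm_natCast] at hn
  refine summable_exp_of_eventually_le_neg_mul_log one_lt_two ?_
  filter_upwards [hlog, eventually_ge_atTop 1] with n hlogn hn
  change -b n / (2 * ℓ n ^ 2) ≤ -2 * log n
  rw [neg_div, neg_mul, neg_le_neg_iff, le_div_iff₀ (by positivity)]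
  calc 2 * log n * (2 * ℓ n ^ 2) = 4 * (log n * ℓ n ^ 3) / ℓ n := by
        field_simp [(hℓpos n).ne']; ring
    _ ≤ 1000 * n / ℓ n := by gcongr ?_ / _; linarith
    _ ≤ b n := hlower hn
end

section
/- With b_n as above (b_1 = 1000, b_n = b_{n-1}(1 + 1/(10+log n))), we have b_n ≥ 1000(1 + Σ_{i=2}^n 1/(10 + log n)) ≥ 32 + 2 log(n+1) for every n ≥ 1. -/
/-!
Unrolling the recursion gives `b n = 1000 * ∏_{i=2}^n (1 + 1/(10 + log i))`, and a product of
factors `1 + x_i` with `x_i ≥ 0` dominates `1 + ∑ x_i`; each summand is at least `1/(10 + log n)`.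
For the second inequality, with `L = log n` one has `log (n + 1) ≤ L + 1` and `L ^ 2 ≤ 4 n`
(apply `log y ≤ y - 1` at `y = √n`), and clearing the denominator `10 + L` leaves a polynomial
inequality with plenty of room.
-/

open Finset Real

theorem Finset.one_add_sum_le_prod_one_add {ι R : Type*} [CommSemiring R] [PartialOrder R]
    [IsOrderedRing R] (s : Finset ι) {f : ι → R} (hf : ∀ i ∈ s, 0 ≤ f i) :
    1 + ∑ i ∈ s, f i ≤ ∏ i ∈ s, (1 + f i) := by
  classical
  induction s using Finset.induction_on with
  | empty => simp
  | insert a s ha ih =>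
    have hfs : ∀ i ∈ s, 0 ≤ f i := fun i hi ↦ hf i (mem_insert_of_mem hi)
    have hfa : 0 ≤ f a := hf a (mem_insert_self a s)
    have hprod : 1 ≤ ∏ i ∈ s, (1 + f i) :=
      (le_add_of_nonneg_right (sum_nonneg hfs)).trans (ih hfs)
    rw [sum_insert ha, prod_insert ha, add_mul, one_mul, add_left_comm,
      add_comm (∏ i ∈ s, (1 + f i))]
    exact add_le_add (le_mul_of_one_le_right hfa hprod) (ih hfs)

theorem Nat.eq_mul_prod_Icc_of_eq_mul {M : Type*} [CommMonoid M] {b f : ℕ → M} {m : ℕ}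
    (h : ∀ n, m + 1 ≤ n → b n = b (n - 1) * f n) :
    ∀ n, m ≤ n → b n = b m * ∏ i ∈ Icc (m + 1) n, f i := by
  intro n hn
  induction n, hn using Nat.le_induction with
  | base => simp
  | succ n hn ih =>
    rw [prod_Icc_succ_top (by omega), ← mul_assoc, ← ih, h (n + 1) (by omega),
      Nat.add_sub_cancel]

theorem Real.sq_log_le_four_mul {x : ℝ} (hx : 1 ≤ x) : log x ^ 2 ≤ 4 * x := by
  have hsqrt : log x = 2 * log √x := by rw [log_sqrt (by linarith)]; ring
  have hle : log √x ≤ √x - 1 := log_le_sub_one_of_pos (sqrt_pos.2 (by linarith))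
  have hlog : 0 ≤ log √x := log_nonneg (one_le_sqrt.2 hx)
  have hsq : √x ^ 2 = x := sq_sqrt (by linarith)
  rw [hsqrt]
  nlinarith

theorem Real.log_add_one_le_log_add_one {x : ℝ} (hx : 1 ≤ x) : log (x + 1) ≤ log x + 1 := by
  have hdiv : log ((x + 1) / x) ≤ (x + 1) / x - 1 := log_le_sub_one_of_pos (by positivity)
  rw [log_div (by positivity) (by positivity), add_div, div_self (by positivity)] at hdiv
  have : 1 / x ≤ 1 := (div_le_one (by positivity)).2 hx
  linarith

theorem thirty_two_add_two_mul_log_add_one_le {x : ℝ} (hx : 1 ≤ x) :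
    32 + 2 * log (x + 1) ≤ 1000 * (1 + (x - 1) / (10 + log x)) := by
  have hL : 0 ≤ log x := log_nonneg hx
  have hL2 := sq_log_le_four_mul hx
  have hM := log_add_one_le_log_add_one hx
  have hden : 0 < 10 + log x := by linarith
  rw [mul_add, mul_one, mul_div_assoc', ← sub_le_iff_le_add', le_div_iff₀ hden]
  nlinarith

/-- Growth estimate `b_n ≥ 1000(1 + Σ_{i=2}^n 1/(10+log n)) ≥ 32 + 2 log(n+1)`. -/
theorem b_growth_estimate (b : ℕ → ℝ)
    (hb1 : b 1 = 1000)
    (hbn : ∀ n, 2 ≤ n → b n = b (n - 1) * (1 + 1 / (10 + Real.log n))) :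
    ∀ n : ℕ, 1 ≤ n →
      1000 * (1 + ∑ _i ∈ Finset.Icc 2 n, 1 / (10 + Real.log n)) ≤ b n ∧
      32 + 2 * Real.log (n + 1)
        ≤ 1000 * (1 + ∑ _i ∈ Finset.Icc 2 n, 1 / (10 + Real.log n)) := by
  intro n hn
  have hsum : ∑ _i ∈ Icc 2 n, 1 / (10 + log n) = ((n : ℝ) - 1) / (10 + log n) := by
    rw [sum_const, Nat.card_Icc, nsmul_eq_mul, Nat.cast_sub (by omega)]
    push_cast
    ring
  refine ⟨?_, hsum ▸ thirty_two_add_two_mul_log_add_one_le (by exact_mod_cast hn)⟩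
  calc 1000 * (1 + ∑ _i ∈ Icc 2 n, 1 / (10 + log n))
      ≤ 1000 * (1 + ∑ i ∈ Icc 2 n, 1 / (10 + log i)) := by
        gcongr with i hi
        · exact Nat.cast_pos.2 (by have := (mem_Icc.1 hi).1; omega)
        · exact (mem_Icc.1 hi).2
    _ ≤ 1000 * ∏ i ∈ Icc 2 n, (1 + 1 / (10 + log i)) := by
        gcongr
        refine one_add_sum_le_prod_one_add _ fun i _ ↦ ?_
        have := log_natCast_nonneg i
        positivity
    _ = b n := by rw [← hb1]; exact (Nat.eq_mul_prod_Icc_of_eq_mul hbn n hn).symm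
end

section
/- Suppose there exist s > 0, a positive integer m, and a probability measure μ such that the systematic scan Gibbs sampler kernel P = P_1 P_2 ⋯ P_d satisfies P^m(x,·) ≥ s μ(·) for all x ∈ X. Then the uniform random scan kernel P_{1/d} = (1/d) Σ_{i=1}^d P_i satisfies P_{1/d}^{md}(x,·) ≥ (1/d)^{md} s μ(·) for all x ∈ X. -/
open ProbabilityTheory MeasureTheory Finset
open scoped ENNReal

/-!
Each coordinate kernel `P i` is one of the `d` summands of `d • P_{1/d}`, so `d⁻¹ • P i ≤ P_{1/d}`.
Domination up to a constant survives composition (`c • κ ≤ κ'` and `c' • η ≤ η'` give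
`(c * c') • κ ∘ₖ η ≤ κ' ∘ₖ η'`, by integrating one inequality against the other), hence
`(d⁻¹)^d • P₁⋯P_d ≤ P_{1/d}^d` and `(d⁻¹)^(md) • (P₁⋯P_d)^m ≤ P_{1/d}^(md)`; the minorization of
`(P₁⋯P_d)^m` therefore transfers to `P_{1/d}^(md)`.
-/

namespace ProbabilityTheory.Kernel

variable {X α β γ : Type*} [MeasurableSpace X] [MeasurableSpace α] [MeasurableSpace β]
  [MeasurableSpace γ]

lemma smul_comp_le_comp {κ₁ κ₂ : Kernel β γ} {η₁ η₂ : Kernel α β} {c c' : ℝ≥0∞}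
    (hκ : ∀ b, c • κ₁ b ≤ κ₂ b) (hη : ∀ a, c' • η₁ a ≤ η₂ a) (a : α) :
    (c * c') • (κ₁ ∘ₖ η₁) a ≤ (κ₂ ∘ₖ η₂) a := by
  refine Measure.le_iff.2 fun s hs => ?_
  rw [Measure.smul_apply, smul_eq_mul, comp_apply' _ _ _ hs, comp_apply' _ _ _ hs]
  calc c * c' * ∫⁻ b, κ₁ b s ∂η₁ a
      = c' * ∫⁻ b, c * κ₁ b s ∂η₁ a := by
        rw [lintegral_const_mul _ (κ₁.measurable_coe hs)]; ring
    _ ≤ c' * ∫⁻ b, κ₂ b s ∂η₁ a := by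
        gcongr with b
        simpa using Measure.le_iff'.1 (hκ b) s
    _ = ∫⁻ b, κ₂ b s ∂(c' • η₁ a) := by rw [lintegral_smul_measure, smul_eq_mul]
    _ ≤ ∫⁻ b, κ₂ b s ∂η₂ a := lintegral_mono' (hη a) le_rfl

lemma smul_pow_le_pow {K R : Kernel X X} {c : ℝ≥0∞} (h : ∀ x, c • K x ≤ R x) (n : ℕ) (x : X) :
    c ^ n • (K ^ n) x ≤ (R ^ n) x := by
  induction n generalizing x with
  | zero => simp
  | succ n ih =>
    rw [pow_succ', pow_succ', pow_succ']
    exact smul_comp_le_comp h ih x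

lemma smul_foldl_comp_le {L : List (Kernel X X)} {R acc Q : Kernel X X} {c c₀ : ℝ≥0∞}
    (hL : ∀ K ∈ L, ∀ x, c • K x ≤ R x) (hacc : ∀ x, c₀ • acc x ≤ Q x) (x : X) :
    (c ^ L.length * c₀) • (L.foldl (fun acc K => K ∘ₖ acc) acc) x ≤ (R ^ L.length * Q) x := by
  induction L generalizing acc Q c₀ x with
  | nil => simpa using hacc x
  | cons K L ih =>
    have := ih (fun K' hK' => hL K' (List.mem_cons_of_mem K hK'))
      (smul_comp_le_comp (hL K List.mem_cons_self) hacc) x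
    rwa [List.length_cons, pow_succ, mul_assoc, pow_succ, mul_assoc]

end ProbabilityTheory.Kernel

lemma kiter_eq_pow {X : Type*} [MeasurableSpace X] (K : Kernel X X) (n : ℕ) :
    kiter K n = K ^ n := by
  induction n with
  | zero => rfl
  | succ n ih => rw [pow_succ', ← ih]; rfl

theorem random_scan_minorization_from_systematic_general {X : Type*} [MeasurableSpace X]
    (d : ℕ)
    (P : Fin d → Kernel X X)
    (Psys : Kernel X X)
    (hPsys : Psys = (List.ofFn P).foldl (fun acc Pi => Pi ∘ₖ acc) Kernel.id)
    (Prand : Kernel X X)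
    (hPrand : ∀ x : X, Prand x = ((d : ℝ≥0∞))⁻¹ • ∑ i, P i x)
    (s : ℝ) (m : ℕ)
    (μ : Measure X)
    (hminor : ∀ x : X, ∀ A : Set X, MeasurableSet A →
      ENNReal.ofReal s * μ A ≤ kiter Psys m x A) :
    ∀ x : X, ∀ A : Set X, MeasurableSet A →
      ((d : ℝ≥0∞))⁻¹ ^ (m * d) * (ENNReal.ofReal s * μ A)
        ≤ kiter Prand (m * d) x A := by
  have hcoord : ∀ K ∈ List.ofFn P, ∀ x, (d : ℝ≥0∞)⁻¹ • K x ≤ Prand x := by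
    rintro _ hK x
    obtain ⟨i, rfl⟩ := List.mem_ofFn.1 hK
    rw [hPrand x]
    gcongr
    exact single_le_sum (f := fun j => P j x) (fun _ _ => Measure.zero_le _) (mem_univ i)
  have hsys : ∀ x, (d : ℝ≥0∞)⁻¹ ^ d • Psys x ≤ (Prand ^ d) x := by
    simpa [hPsys] using Kernel.smul_foldl_comp_le hcoord (acc := Kernel.id) (Q := 1) (c₀ := 1)
      fun x => le_of_eq (one_smul _ _)
  intro x A hA
  rw [kiter_eq_pow] at hminor ⊢
  calc (d : ℝ≥0∞)⁻¹ ^ (m * d) * (ENNReal.ofReal s * μ A)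
      = ((d : ℝ≥0∞)⁻¹ ^ d) ^ m * (ENNReal.ofReal s * μ A) := by rw [← pow_mul, mul_comm m d]
    _ ≤ ((d : ℝ≥0∞)⁻¹ ^ d) ^ m * (Psys ^ m) x A := by gcongr; exact hminor x A hA
    _ ≤ ((Prand ^ d) ^ m) x A := Measure.le_iff'.1 (Kernel.smul_pow_le_pow hsys m x) A
    _ = (Prand ^ (m * d)) x A := by rw [← pow_mul, mul_comm]

/-- A minorization for the systematic scan Gibbs sampler `P = P₁P₂⋯P_d` transfers to
the uniform random scan sampler `P_{1/d} = (1/d) Σᵢ Pᵢ`: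
`P_{1/d}^{md}(x,·) ≥ (1/d)^{md} s μ(·)`. -/
theorem random_scan_minorization_from_systematic {X : Type*} [MeasurableSpace X]
    (d : ℕ) (hd : 0 < d)
    (P : Fin d → Kernel X X) (hP : ∀ i, IsMarkovKernel (P i))
    (Psys : Kernel X X)
    (hPsys : Psys = (List.ofFn P).foldl (fun acc Pi => Pi ∘ₖ acc) Kernel.id)
    (Prand : Kernel X X) [IsMarkovKernel Prand]
    (hPrand : ∀ x : X, Prand x = ((d : ℝ≥0∞))⁻¹ • ∑ i, P i x)
    (s : ℝ) (hs : 0 < s) (m : ℕ) (hm : 0 < m)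
    (μ : Measure X) [IsProbabilityMeasure μ]
    (hminor : ∀ x : X, ∀ A : Set X, MeasurableSet A →
      ENNReal.ofReal s * μ A ≤ kiter Psys m x A) :
    ∀ x : X, ∀ A : Set X, MeasurableSet A →
      ((d : ℝ≥0∞))⁻¹ ^ (m * d) * (ENNReal.ofReal s * μ A)
        ≤ kiter Prand (m * d) x A :=
  random_scan_minorization_from_systematic_general d P Psys hPsys Prand hPrand s m μ hminor
end
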